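/- Let ρ : [0,T] × 𝕋 → (0,∞) be a smooth positive solution of ∂ₜρ + ∂ₓ( ρ ∂ₓ( ∂ₓ(ρ^β ∂ₓρ) − (β/2) ρ^{β−1} |∂ₓρ|² ) ) = 0 on the one-dimensional torus. Then for all t ∈ (0,T), d/dt ∫_𝕋 ρ^β |∂ₓρ|²/2 dx + ∫_𝕋 ρ | ∂ₓ( ∂ₓ(ρ^β ∂ₓρ) − (β/2) ρ^{β−1} |∂ₓρ|² ) |² dx = 0. -/

import Mathlib

open scoped ContDiff Interval
open MeasureTheory intervalIntegral Set Function Metric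
set_option maxHeartbeats 1000000

noncomputable def Fb (β : ℝ) (f : ℝ → ℝ) : ℝ → ℝ := fun x => f x ^ β * deriv f x

noncomputable def Xi (β : ℝ) (f : ℝ → ℝ) : ℝ → ℝ :=
  fun x => deriv (Fb β f) x - β / 2 * f x ^ (β - 1) * (deriv f x) ^ 2

lemma contDiff_deriv' {f : ℝ → ℝ} (hf : ContDiff ℝ ∞ f) : ContDiff ℝ ∞ (deriv f) :=
  (contDiff_infty_iff_deriv.mp hf).2

lemma contDiff_rpow' {f : ℝ → ℝ} (hf : ContDiff ℝ ∞ f) (hpos : ∀ x, 0 < f x) (p : ℝ) :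
    ContDiff ℝ ∞ (fun x => f x ^ p) :=
  hf.rpow_const_of_ne (fun x => (hpos x).ne')

lemma contDiff_Fb {β : ℝ} {f : ℝ → ℝ} (hf : ContDiff ℝ ∞ f) (hpos : ∀ x, 0 < f x) :
    ContDiff ℝ ∞ (Fb β f) :=
  (contDiff_rpow' hf hpos β).mul (contDiff_deriv' hf)

lemma contDiff_Xi {β : ℝ} {f : ℝ → ℝ} (hf : ContDiff ℝ ∞ f) (hpos : ∀ x, 0 < f x) :
    ContDiff ℝ ∞ (Xi β f) :=
  (contDiff_deriv' (contDiff_Fb hf hpos)).sub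
    (((contDiff_const.mul (contDiff_rpow' hf hpos (β - 1)))).mul ((contDiff_deriv' hf).pow 2))

lemma periodic_deriv' {f : ℝ → ℝ} (hp : Function.Periodic f 1) :
    Function.Periodic (deriv f) 1 := by
  intro x
  have h : (fun y => f (y + 1)) = f := funext fun y => hp y
  calc deriv f (x + 1) = deriv (fun y => f (y + 1)) x := (deriv_comp_add_const f 1 x).symm
    _ = deriv f x := by rw [h]

lemma periodic_Fb {β : ℝ} {f : ℝ → ℝ} (hp : Function.Periodic f 1) :
    Function.Periodic (Fb β f) 1 := fun x => by
  simp only [Fb, hp x, periodic_deriv' hp x]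

lemma periodic_Xi {β : ℝ} {f : ℝ → ℝ} (hp : Function.Periodic f 1) :
    Function.Periodic (Xi β f) 1 := fun x => by
  simp only [Xi, periodic_deriv' (periodic_Fb (β := β) hp) x, hp x, periodic_deriv' hp x]

lemma ibp' {u v : ℝ → ℝ} (hu : ContDiff ℝ ∞ u) (hv : ContDiff ℝ ∞ v)
    (hup : Function.Periodic u 1) (hvp : Function.Periodic v 1) :
    ∫ x in (0:ℝ)..1, u x * deriv v x = - ∫ x in (0:ℝ)..1, deriv u x * v x := by
  have h := intervalIntegral.integral_mul_deriv_eq_deriv_mul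
    (u := u) (v := v) (u' := deriv u) (v' := deriv v) (a := 0) (b := 1)
    (fun x _ => (hu.differentiable (by norm_num) x).hasDerivAt)
    (fun x _ => (hv.differentiable (by norm_num) x).hasDerivAt)
    ((contDiff_deriv' hu).continuous.intervalIntegrable 0 1)
    ((contDiff_deriv' hv).continuous.intervalIntegrable 0 1)
  have h1 : u 1 = u 0 := by simpa using hup 0
  have h2 : v 1 = v 0 := by simpa using hvp 0
  rw [h, h1, h2]; ring

lemma contDiff_slice_right {F : ℝ × ℝ → ℝ} (hF : ContDiff ℝ ∞ F) (t : ℝ) :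
    ContDiff ℝ ∞ (fun y => F (t, y)) := hF.comp (ContDiff.prodMk contDiff_const contDiff_id)

lemma contDiff_slice_left {F : ℝ × ℝ → ℝ} (hF : ContDiff ℝ ∞ F) (x : ℝ) :
    ContDiff ℝ ∞ (fun s => F (s, x)) := hF.comp (ContDiff.prodMk contDiff_id contDiff_const)

lemma hasDerivAt_slice_right {F : ℝ × ℝ → ℝ} (hF : ContDiff ℝ ∞ F) (t x : ℝ) :
    HasDerivAt (fun y => F (t, y)) (fderiv ℝ F (t, x) (0, 1)) x :=
  ((hF.differentiable (by norm_num) (t, x)).hasFDerivAt).comp_hasDerivAt x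
    (HasDerivAt.prodMk (hasDerivAt_const x t) (hasDerivAt_id x))

lemma hasDerivAt_slice_left {F : ℝ × ℝ → ℝ} (hF : ContDiff ℝ ∞ F) (t x : ℝ) :
    HasDerivAt (fun s => F (s, x)) (fderiv ℝ F (t, x) (1, 0)) t :=
  ((hF.differentiable (by norm_num) (t, x)).hasFDerivAt).comp_hasDerivAt t
    (HasDerivAt.prodMk (hasDerivAt_id t) (hasDerivAt_const t x))

lemma contDiff_fderiv_apply' {F : ℝ × ℝ → ℝ} (hF : ContDiff ℝ ∞ F) (v : ℝ × ℝ) :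
    ContDiff ℝ ∞ (fun p : ℝ × ℝ => fderiv ℝ F p v) :=
  (hF.fderiv_right (by norm_num)).clm_apply contDiff_const

lemma hasDerivAt_fderiv_slice_left {F : ℝ × ℝ → ℝ} (hF : ContDiff ℝ ∞ F) (v : ℝ × ℝ) (t x : ℝ) :
    HasDerivAt (fun s => fderiv ℝ F (s, x) v) (fderiv ℝ (fderiv ℝ F) (t, x) (1, 0) v) t := by
  have hΦ : ContDiff ℝ ∞ (fderiv ℝ F) := hF.fderiv_right (by norm_num)
  have hc : HasDerivAt (fun s => fderiv ℝ F (s, x)) (fderiv ℝ (fderiv ℝ F) (t, x) (1, 0)) t :=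
    ((hΦ.differentiable (by norm_num) (t, x)).hasFDerivAt).comp_hasDerivAt t
      (HasDerivAt.prodMk (hasDerivAt_id t) (hasDerivAt_const t x))
  simpa using hc.clm_apply (hasDerivAt_const t v)

lemma hasDerivAt_fderiv_slice_right {F : ℝ × ℝ → ℝ} (hF : ContDiff ℝ ∞ F) (v : ℝ × ℝ) (t x : ℝ) :
    HasDerivAt (fun y => fderiv ℝ F (t, y) v) (fderiv ℝ (fderiv ℝ F) (t, x) (0, 1) v) x := by
  have hΦ : ContDiff ℝ ∞ (fderiv ℝ F) := hF.fderiv_right (by norm_num)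
  have hc : HasDerivAt (fun y => fderiv ℝ F (t, y)) (fderiv ℝ (fderiv ℝ F) (t, x) (0, 1)) x :=
    ((hΦ.differentiable (by norm_num) (t, x)).hasFDerivAt).comp_hasDerivAt x
      (HasDerivAt.prodMk (hasDerivAt_const x t) (hasDerivAt_id x))
  simpa using hc.clm_apply (hasDerivAt_const x v)

lemma schwarz' {F : ℝ × ℝ → ℝ} (hF : ContDiff ℝ ∞ F) (t x : ℝ) :
    deriv (fun s => deriv (fun y => F (s, y)) x) t
      = deriv (fun y => deriv (fun s => F (s, y)) t) x := by
  have hsym : IsSymmSndFDerivAt ℝ F (t, x) :=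
    hF.contDiffAt.isSymmSndFDerivAt (by
      have : ((2:ℕ∞) : WithTop ℕ∞) ≤ ((⊤:ℕ∞) : WithTop ℕ∞) := by exact_mod_cast le_top
      simpa using this)
  have e1 : (fun s => deriv (fun y => F (s, y)) x) = fun s => fderiv ℝ F (s, x) (0, 1) :=
    funext fun s => (hasDerivAt_slice_right hF s x).deriv
  have e2 : (fun y => deriv (fun s => F (s, y)) t) = fun y => fderiv ℝ F (t, y) (1, 0) :=
    funext fun y => (hasDerivAt_slice_left hF t y).deriv
  rw [e1, e2, (hasDerivAt_fderiv_slice_left hF (0, 1) t x).deriv,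
    (hasDerivAt_fderiv_slice_right hF (1, 0) t x).deriv]
  exact hsym (1, 0) (0, 1)

lemma contDiff_rpow2 {E : Type*} [NormedAddCommGroup E] [NormedSpace ℝ E] {f : E → ℝ}
    (hf : ContDiff ℝ ∞ f) (hpos : ∀ x, 0 < f x) (p : ℝ) :
    ContDiff ℝ ∞ (fun x => f x ^ p) :=
  hf.rpow_const_of_ne (fun x => (hpos x).ne')

lemma key (β : ℝ) (ρ : ℝ → ℝ → ℝ)
    (hρ : ContDiff ℝ ∞ (fun p : ℝ × ℝ => ρ p.1 p.2))
    (hpos : ∀ t x, 0 < ρ t x)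
    (hper : ∀ t, Function.Periodic (ρ t) 1)
    (hpde : ∀ t x, deriv (fun s => ρ s x) t +
        deriv (fun y => ρ t y *
          deriv (fun z =>
            deriv (fun w => ρ t w ^ β * deriv (ρ t) w) z
              - β / 2 * ρ t z ^ (β - 1) * (deriv (ρ t) z) ^ 2) y) x = 0) (t : ℝ) :
    deriv (fun s => ∫ x in (0:ℝ)..1, ρ s x ^ β * (deriv (ρ s) x) ^ 2 / 2) t
        + ∫ x in (0:ℝ)..1,
            ρ t x *
              (deriv (fun y =>
                deriv (fun z => ρ t z ^ β * deriv (ρ t) z) y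
                  - β / 2 * ρ t y ^ (β - 1) * (deriv (ρ t) y) ^ 2) x) ^ 2 = 0 := by
  have hr : ContDiff ℝ ∞ (ρ t) := contDiff_slice_right hρ t
  have hpost : ∀ x, 0 < ρ t x := hpos t
  have hpert : Function.Periodic (ρ t) 1 := hper t
  have hFb' : ContDiff ℝ ∞ (Fb β (ρ t)) := contDiff_Fb hr hpost
  have hXi' : ContDiff ℝ ∞ (Xi β (ρ t)) := contDiff_Xi hr hpost
  have hFbp : Function.Periodic (Fb β (ρ t)) 1 := periodic_Fb hpert
  have hXip : Function.Periodic (Xi β (ρ t)) 1 := periodic_Xi hpert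
  have hv : ContDiff ℝ ∞ (fun y => ρ t y * deriv (Xi β (ρ t)) y) :=
    hr.mul (contDiff_deriv' hXi')
  have hvper : Function.Periodic (fun y => ρ t y * deriv (Xi β (ρ t)) y) 1 := fun y => by
    simp only [hpert y, periodic_deriv' hXip y]
  -- the time derivative of ρ at time t, as a function of x
  set rt : ℝ → ℝ := fun y => deriv (fun s => ρ s y) t with hrtdef
  have hrt_eq : ∀ y, rt y = fderiv ℝ (fun p : ℝ × ℝ => ρ p.1 p.2) (t, y) (1, 0) :=
    fun y => (hasDerivAt_slice_left hρ t y).deriv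
  have hrt : ContDiff ℝ ∞ rt := by
    have h : rt = fun y => fderiv ℝ (fun p : ℝ × ℝ => ρ p.1 p.2) (t, y) (1, 0) :=
      funext hrt_eq
    rw [h]
    exact contDiff_slice_right (contDiff_fderiv_apply' hρ (1, 0)) t
  have hrtper : Function.Periodic rt 1 := by
    intro y
    have h : (fun s => ρ s (y + 1)) = fun s => ρ s y := funext fun s => hper s y
    show deriv (fun s => ρ s (y + 1)) t = deriv (fun s => ρ s y) t
    rw [h]
  have hpde' : ∀ x, rt x = - deriv (fun y => ρ t y * deriv (Xi β (ρ t)) y) x :=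
    fun x => eq_neg_of_add_eq_zero_left (hpde t x)
  -- joint smoothness of the energy density and its time derivative
  have hD2 : ContDiff ℝ ∞ (fun q : ℝ × ℝ => deriv (ρ q.1) q.2) := by
    have e : (fun q : ℝ × ℝ => deriv (ρ q.1) q.2)
        = fun q : ℝ × ℝ => fderiv ℝ (fun p : ℝ × ℝ => ρ p.1 p.2) q (0, 1) :=
      funext fun q => (hasDerivAt_slice_right hρ q.1 q.2).deriv
    rw [e]
    exact contDiff_fderiv_apply' hρ (0, 1)
  have hPc : ContDiff ℝ ∞ (fun q : ℝ × ℝ => ρ q.1 q.2 ^ β * (deriv (ρ q.1) q.2) ^ 2 / 2) :=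
    ((contDiff_rpow2 hρ (fun q => hpos q.1 q.2) β).mul (hD2.pow 2)).div_const 2
  set Q : ℝ × ℝ → ℝ := fun p =>
    fderiv ℝ (fun q : ℝ × ℝ => ρ q.1 q.2 ^ β * (deriv (ρ q.1) q.2) ^ 2 / 2) p (1, 0) with hQdef
  have hQc : Continuous Q := (contDiff_fderiv_apply' hPc (1, 0)).continuous
  -- differentiation under the integral sign
  obtain ⟨C, hC⟩ := (IsCompact.prod isCompact_Icc isCompact_Icc :
      IsCompact ((Icc (t-1) (t+1)) ×ˢ (Icc (0:ℝ) 1))).exists_bound_of_continuousOn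
      hQc.continuousOn
  have hEd : HasDerivAt (fun s => ∫ x in (0:ℝ)..1, ρ s x ^ β * (deriv (ρ s) x) ^ 2 / 2)
      (∫ x in (0:ℝ)..1, Q (t, x)) t := by
    have hF_meas : ∀ᶠ s in nhds t, AEStronglyMeasurable
        (fun x => ρ s x ^ β * (deriv (ρ s) x) ^ 2 / 2)
        (MeasureTheory.volume.restrict (Ι (0:ℝ) 1)) := by
      refine Filter.Eventually.of_forall fun s => Continuous.aestronglyMeasurable ?_
      exact (contDiff_slice_right hPc s).continuous
    have hF_int : IntervalIntegrable (fun x => ρ t x ^ β * (deriv (ρ t) x) ^ 2 / 2)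
        MeasureTheory.volume 0 1 :=
      ((contDiff_slice_right hPc t).continuous).intervalIntegrable 0 1
    have hF'_meas : AEStronglyMeasurable (fun x => Q (t, x))
        (MeasureTheory.volume.restrict (Ι (0:ℝ) 1)) :=
      (hQc.comp (continuous_const.prodMk continuous_id)).aestronglyMeasurable
    have h_bound : ∀ᵐ x ∂MeasureTheory.volume, x ∈ Ι (0:ℝ) 1 →
        ∀ s ∈ Metric.ball t 1, ‖Q (s, x)‖ ≤ C := by
      refine Filter.Eventually.of_forall fun x hx s hs => hC (s, x) (Set.mem_prod.mpr ⟨?_, ?_⟩)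
      · have h1 : |s - t| < 1 := by simpa [Real.dist_eq] using hs
        obtain ⟨h2, h3⟩ := abs_lt.mp h1
        exact ⟨by linarith, by linarith⟩
      · have hx' : x ∈ Set.Ioc (0:ℝ) 1 := by
          rwa [Set.uIoc_of_le (by norm_num : (0:ℝ) ≤ 1)] at hx
        exact ⟨hx'.1.le, hx'.2⟩
    have bound_int : IntervalIntegrable (fun _ : ℝ => C) MeasureTheory.volume 0 1 :=
      intervalIntegrable_const
    have h_diff : ∀ᵐ x ∂MeasureTheory.volume, x ∈ Ι (0:ℝ) 1 →
        ∀ s ∈ Metric.ball t 1, HasDerivAt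
          (fun s' => ρ s' x ^ β * (deriv (ρ s') x) ^ 2 / 2) (Q (s, x)) s :=
      Filter.Eventually.of_forall fun x _ s _ => hasDerivAt_slice_left hPc s x
    exact (intervalIntegral.hasDerivAt_integral_of_dominated_loc_of_deriv_le
      (Metric.ball_mem_nhds t one_pos) hF_meas hF_int hF'_meas h_bound bound_int h_diff).2
  -- pointwise formula for Q (t, x)
  have hQval : ∀ x, Q (t, x) =
      β / 2 * ρ t x ^ (β - 1) * (deriv (ρ t) x) ^ 2 * rt x + Fb β (ρ t) x * deriv rt x := by
    intro x
    have hA : HasDerivAt (fun s => ρ s x) (rt x) t := by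
      rw [hrt_eq x]; exact hasDerivAt_slice_left hρ t x
    have e1 : (fun s => deriv (ρ s) x)
        = fun s => fderiv ℝ (fun p : ℝ × ℝ => ρ p.1 p.2) (s, x) (0, 1) :=
      funext fun s => (hasDerivAt_slice_right hρ s x).deriv
    have hs1 : deriv (fun s => fderiv ℝ (fun p : ℝ × ℝ => ρ p.1 p.2) (s, x) (0, 1)) t
        = deriv rt x := by
      rw [← e1]; exact schwarz' hρ t x
    have hV : fderiv ℝ (fderiv ℝ (fun p : ℝ × ℝ => ρ p.1 p.2)) (t, x) (1, 0) (0, 1)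
        = deriv rt x :=
      ((hasDerivAt_fderiv_slice_left hρ (0, 1) t x).deriv).symm.trans hs1
    have hB : HasDerivAt (fun s => deriv (ρ s) x) (deriv rt x) t := by
      rw [e1, ← hV]; exact hasDerivAt_fderiv_slice_left hρ (0, 1) t x
    have h1 : HasDerivAt (fun s => ρ s x ^ β) (rt x * β * ρ t x ^ (β - 1)) t :=
      hA.rpow_const (Or.inl (hpos t x).ne')
    have h3 := (h1.mul (hB.pow 2)).div_const 2
    have h4 : HasDerivAt (fun s => ρ s x ^ β * (deriv (ρ s) x) ^ 2 / 2) (Q (t, x)) t :=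
      hasDerivAt_slice_left hPc t x
    rw [h4.unique h3]
    simp only [Fb]
    push_cast
    norm_num
    ring
  -- continuity facts
  have hrtc : Continuous rt := hrt.continuous
  have hc1 : Continuous (fun x => β / 2 * ρ t x ^ (β - 1) * (deriv (ρ t) x) ^ 2 * rt x) :=
    ((continuous_const.mul (contDiff_rpow' hr hpost (β - 1)).continuous).mul
      (((contDiff_deriv' hr).continuous).pow 2)).mul hrtc
  have hc2 : Continuous (fun x => Fb β (ρ t) x * deriv rt x) :=
    hFb'.continuous.mul (contDiff_deriv' hrt).continuous
  have I1 : (∫ x in (0:ℝ)..1, Q (t, x))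
      = (∫ x in (0:ℝ)..1, β / 2 * ρ t x ^ (β - 1) * (deriv (ρ t) x) ^ 2 * rt x)
        + ∫ x in (0:ℝ)..1, Fb β (ρ t) x * deriv rt x := by
    rw [← intervalIntegral.integral_add (hc1.intervalIntegrable 0 1) (hc2.intervalIntegrable 0 1)]
    exact intervalIntegral.integral_congr fun x _ => hQval x
  have I2 : (∫ x in (0:ℝ)..1, Fb β (ρ t) x * deriv rt x)
      = - ∫ x in (0:ℝ)..1, deriv (Fb β (ρ t)) x * rt x := ibp' hFb' hrt hFbp hrtper
  have I3 : (∫ x in (0:ℝ)..1, β / 2 * ρ t x ^ (β - 1) * (deriv (ρ t) x) ^ 2 * rt x)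
        - (∫ x in (0:ℝ)..1, deriv (Fb β (ρ t)) x * rt x)
      = ∫ x in (0:ℝ)..1, Xi β (ρ t) x * deriv (fun y => ρ t y * deriv (Xi β (ρ t)) y) x := by
    rw [← intervalIntegral.integral_sub (hc1.intervalIntegrable 0 1)
      (by exact ((contDiff_deriv' hFb').continuous.mul hrtc).intervalIntegrable 0 1 :
        IntervalIntegrable (fun x => deriv (Fb β (ρ t)) x * rt x) MeasureTheory.volume 0 1)]
    refine intervalIntegral.integral_congr fun x _ => ?_
    rw [hpde' x]
    simp only [Xi]
    ring
  have I4 : (∫ x in (0:ℝ)..1, Xi β (ρ t) x * deriv (fun y => ρ t y * deriv (Xi β (ρ t)) y) x)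
      = - ∫ x in (0:ℝ)..1, deriv (Xi β (ρ t)) x * (ρ t x * deriv (Xi β (ρ t)) x) :=
    ibp' hXi' hv hXip hvper
  have I5 : (∫ x in (0:ℝ)..1, deriv (Xi β (ρ t)) x * (ρ t x * deriv (Xi β (ρ t)) x))
      = ∫ x in (0:ℝ)..1, ρ t x * (deriv (Xi β (ρ t)) x) ^ 2 :=
    intervalIntegral.integral_congr fun x _ => by ring
  show deriv (fun s => ∫ x in (0:ℝ)..1, ρ s x ^ β * (deriv (ρ s) x) ^ 2 / 2) t
      + ∫ x in (0:ℝ)..1, ρ t x * (deriv (Xi β (ρ t)) x) ^ 2 = 0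
  rw [hEd.deriv, I1, I2, ← sub_eq_add_neg, I3, I4, I5]
  ring



/-- Energy dissipation identity:
`d/dt ∫ ρ^β|∂ₓρ|²/2 + ∫ ρ|∂ₓ(∂ₓ(ρ^β∂ₓρ) − (β/2)ρ^{β−1}|∂ₓρ|²)|² = 0`. -/
theorem stmt9 (β T : ℝ) (hT : 0 < T) (ρ : ℝ → ℝ → ℝ)
    (hρ : ContDiff ℝ (⊤ : ℕ∞) (fun p : ℝ × ℝ => ρ p.1 p.2))
    (hpos : ∀ t x, 0 < ρ t x)
    (hper : ∀ t, Function.Periodic (ρ t) 1)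
    (hpde : ∀ t x, deriv (fun s => ρ s x) t +
        deriv (fun y => ρ t y *
          deriv (fun z =>
            deriv (fun w => ρ t w ^ β * deriv (ρ t) w) z
              - β / 2 * ρ t z ^ (β - 1) * (deriv (ρ t) z) ^ 2) y) x = 0) :
    ∀ t ∈ Set.Ioo 0 T,
      deriv (fun s => ∫ x in (0:ℝ)..1, ρ s x ^ β * (deriv (ρ s) x) ^ 2 / 2) t
        + ∫ x in (0:ℝ)..1,
            ρ t x *
              (deriv (fun y =>
                deriv (fun z => ρ t z ^ β * deriv (ρ t) z) y
                  - β / 2 * ρ t y ^ (β - 1) * (deriv (ρ t) y) ^ 2) x) ^ 2 = 0 :=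
  fun t _ => key β ρ (hρ.of_le (by simp)) hpos hper hpde t
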